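/- arXiv:1512.06958 — 2 statements merged into one kernel-verified Lean document; each statement's English description precedes it below -/
import Mathlib

section
/- Let Δ be a flag normal (d-1)-pseudomanifold with d ≥ 2. Then Δ has at least 2d vertices, and equality holds if and only if Δ is the boundary complex of the d-dimensional cross-polytope (the d-fold join of the 0-sphere S^0). -/
open Finset

/-- An abstract simplicial complex on vertex type `V`, given by a finite,
downward-closed family of finite faces containing the empty face. -/
structure SC (V : Type*) [DecidableEq V] where
  faces : Finset (Finset V)
  empty_mem : ∅ ∈ faces
  down_closed : ∀ ⦃σ τ : Finset V⦄, σ ∈ faces → τ ⊆ σ → τ ∈ faces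

namespace SC

variable {V : Type*} [DecidableEq V]

/-- The vertex set of a complex. -/
def vertexSet (Δ : SC V) : Finset V := Δ.faces.sup id

/-- `fNum Δ i` is the number of `i`-dimensional faces (faces of cardinality `i+1`). -/
def fNum (Δ : SC V) (i : ℕ) : ℕ := (Δ.faces.filter fun σ => σ.card = i + 1).card

/-- A complex is flag if it is the clique complex of its graph, i.e. every set of
vertices which is pairwise joined by edges is a face (equivalently, all minimal
non-faces have cardinality two). -/
def IsFlag (Δ : SC V) : Prop :=
  ∀ σ : Finset V, (∀ u ∈ σ, ∀ v ∈ σ, ({u, v} : Finset V) ∈ Δ.faces) → σ ∈ Δ.faces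

/-- The restriction `Δ[W]` of `Δ` to a set `W` of vertices. -/
def restrict (Δ : SC V) (W : Finset V) : SC V where
  faces := Δ.faces.filter fun σ => σ ⊆ W
  empty_mem := by simp [Δ.empty_mem]
  down_closed := by
    intro σ τ hσ hτ
    simp only [mem_filter] at hσ ⊢
    exact ⟨Δ.down_closed hσ.1 hτ, hτ.trans hσ.2⟩

/-- The link of a face `σ` in `Δ`. -/
def link (Δ : SC V) (σ : Finset V) : SC V where
  faces := insert ∅ (Δ.faces.filter fun τ => Disjoint τ σ ∧ τ ∪ σ ∈ Δ.faces)
  empty_mem := mem_insert_self _ _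
  down_closed := by
    intro τ ρ hτ hρ
    rcases mem_insert.1 hτ with h | h
    · subst h
      simp [Finset.subset_empty.1 hρ]
    · simp only [mem_filter] at h
      refine mem_insert.2 (Or.inr ?_)
      simp only [mem_filter]
      exact ⟨Δ.down_closed h.1 hρ, h.2.1.mono_left hρ,
        Δ.down_closed h.2.2 (Finset.union_subset_union hρ Finset.Subset.rfl)⟩

/-- A facet is a maximal face. -/
def IsFacet (Δ : SC V) (σ : Finset V) : Prop :=
  σ ∈ Δ.faces ∧ ∀ τ ∈ Δ.faces, σ ⊆ τ → σ = τ

/-- `Δ` is pure of dimension `D`: all faces have dimension at most `D` and all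
facets have dimension exactly `D`. -/
def Pure (Δ : SC V) (D : ℕ) : Prop :=
  (∀ σ ∈ Δ.faces, σ.card ≤ D + 1) ∧ (∃ σ ∈ Δ.faces, σ.card = D + 1) ∧
    ∀ σ : Finset V, Δ.IsFacet σ → σ.card = D + 1

/-- The graph (1-skeleton) of a complex. -/
def graph (Δ : SC V) : SimpleGraph V where
  Adj u v := u ≠ v ∧ ({u, v} : Finset V) ∈ Δ.faces
  symm := by
    constructor
    intro u v h
    exact ⟨h.1.symm, by rw [Finset.pair_comm]; exact h.2⟩
  loopless := by constructor; intro u h; exact h.1 rfl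

/-- A complex is connected if its vertex set is nonempty and any two vertices are
joined by a path in its graph. -/
def Connected (Δ : SC V) : Prop :=
  Δ.vertexSet.Nonempty ∧ ∀ u ∈ Δ.vertexSet, ∀ v ∈ Δ.vertexSet, Δ.graph.Reachable u v

/-- The reduced Euler characteristic `χ̃(Δ) = -1 + f₀ - f₁ + f₂ - ⋯`. -/
def redChar (Δ : SC V) : ℤ := -∑ σ ∈ Δ.faces, (-1 : ℤ) ^ σ.card

/-- `Δ` is an Eulerian complex of dimension `D`: it is pure of dimension `D` and the
reduced Euler characteristic of the link of every face `σ` (including `σ = ∅`)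
equals `(-1) ^ (dim lk σ)`, written multiplicatively to avoid signed dimensions. -/
def IsEulerian (Δ : SC V) (D : ℕ) : Prop :=
  Δ.Pure D ∧ ∀ σ ∈ Δ.faces, (Δ.link σ).redChar * (-1) ^ σ.card = (-1) ^ D

/-- A weak pseudomanifold of dimension `D`: pure and every ridge ((D-1)-face) lies
in exactly two facets. -/
def IsWeakPseudo (Δ : SC V) (D : ℕ) : Prop :=
  Δ.Pure D ∧ ∀ σ ∈ Δ.faces, σ.card = D →
    (Δ.faces.filter fun τ => σ ⊆ τ ∧ τ.card = D + 1).card = 2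

/-- A normal pseudomanifold of dimension `D`: a connected weak pseudomanifold all of
whose links of faces of dimension `≤ D - 2` are connected. -/
def IsNormalPseudo (Δ : SC V) (D : ℕ) : Prop :=
  Δ.IsWeakPseudo D ∧ Δ.Connected ∧
    ∀ σ ∈ Δ.faces, σ.card + 1 ≤ D → (Δ.link σ).Connected

/-- The join of two complexes (on disjoint vertex sets). -/
def join (Δ Γ : SC V) : SC V where
  faces := (Δ.faces ×ˢ Γ.faces).image fun p => p.1 ∪ p.2
  empty_mem := Finset.mem_image.2 ⟨(∅, ∅),
    Finset.mem_product.2 ⟨Δ.empty_mem, Γ.empty_mem⟩, Finset.union_empty ∅⟩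
  down_closed := by
    intro σ τ hσ hτ
    rw [Finset.mem_image] at hσ ⊢
    obtain ⟨⟨a, b⟩, hab, rfl⟩ := hσ
    rw [Finset.mem_product] at hab
    refine ⟨(τ ∩ a, τ ∩ b), Finset.mem_product.2
      ⟨Δ.down_closed hab.1 Finset.inter_subset_right,
       Γ.down_closed hab.2 Finset.inter_subset_right⟩, ?_⟩
    rw [← Finset.inter_union_distrib_left]
    exact Finset.inter_eq_left.2 hτ

/-- The trivial complex, whose only face is the empty face (identity for join). -/
def trivialSC : SC V where
  faces := {∅}
  empty_mem := Finset.mem_singleton_self ∅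
  down_closed := by
    intro σ τ hσ hτ
    simp only [Finset.mem_singleton] at hσ ⊢
    subst hσ
    exact Finset.subset_empty.1 hτ

/-- The join of a finite family of complexes. -/
def bigJoin : {k : ℕ} → (Fin k → SC V) → SC V
  | 0, _ => trivialSC
  | _ + 1, C => (C 0).join (bigJoin fun i => C i.succ)

/-- `Δ` is a cycle (circle) with `n` vertices: a connected, 1-dimensional complex
all of whose vertices have exactly two neighbours. -/
def IsCycle (Δ : SC V) (n : ℕ) : Prop :=
  Δ.vertexSet.card = n ∧ (∀ σ ∈ Δ.faces, σ.card ≤ 2) ∧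
    (∀ v ∈ Δ.vertexSet, (Δ.link {v}).vertexSet.card = 2) ∧ Δ.Connected

/-- `Δ` is the boundary complex of the `d`-dimensional cross-polytope: its vertices
come in `d` antipodal pairs and the faces are exactly the sets containing at most
one vertex of each pair. -/
def IsCrossPolytopeBoundary (Δ : SC V) (d : ℕ) : Prop :=
  ∃ x y : Fin d → V, Function.Injective x ∧ Function.Injective y ∧
    (∀ i j, x i ≠ y j) ∧
    ∀ σ : Finset V, σ ∈ Δ.faces ↔
      ((∀ v ∈ σ, ∃ i, v = x i ∨ v = y i) ∧ ∀ i, ¬(x i ∈ σ ∧ y i ∈ σ))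

/-- `Δ` is a simplicial 2-sphere: a connected weak 2-pseudomanifold whose vertex
links are circles and whose reduced Euler characteristic is 1. -/
def IsSphere2 (Δ : SC V) : Prop :=
  Δ.Connected ∧ Δ.IsWeakPseudo 2 ∧
    (∀ v ∈ Δ.vertexSet, ∃ n, 3 ≤ n ∧ (Δ.link {v}).IsCycle n) ∧ Δ.redChar = 1

/-- `Δ` is a (closed) simplicial 3-manifold: connected, pure of dimension 3, and the
link of every vertex is a simplicial 2-sphere. -/
def Is3Manifold (Δ : SC V) : Prop :=
  Δ.Connected ∧ Δ.Pure 3 ∧ ∀ v ∈ Δ.vertexSet, (Δ.link {v}).IsSphere2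

/-- `Δ` is a disjoint union of cycles, each of length at least 4: it is
1-dimensional, 2-regular and its graph has no triangles. -/
def IsDisjointUnionOfCyclesGe4 (Δ : SC V) : Prop :=
  (∀ σ ∈ Δ.faces, σ.card ≤ 2) ∧
    (∀ v ∈ Δ.vertexSet, (Δ.link {v}).vertexSet.card = 2) ∧
    ∀ u v w : V, ({u, v} : Finset V) ∈ Δ.faces → ({v, w} : Finset V) ∈ Δ.faces →
      ({u, w} : Finset V) ∈ Δ.faces → u = v ∨ v = w ∨ u = w

end SC

/-!
Take a facet `{x₀, …, x_{d-1}}`. The ridge obtained by deleting `xᵢ` lies in exactly one other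
facet, which is the ridge plus a new vertex `yᵢ`; flagness forbids the edge `xᵢyᵢ`, since
otherwise the facet plus `yᵢ` would be a face of dimension `d`. As `yᵢ` is joined to every `xⱼ`
with `j ≠ i`, the `yᵢ` are distinct, giving `2d` vertices. If there are no others, flipping the
facet `{yᵢ} ∪ {xₖ : k ≠ i}` across `xⱼ` must produce the only vertex not joined to `xⱼ`, which is
`yⱼ`; so `yᵢyⱼ` is an edge, and flagness makes every set avoiding all pairs `{xᵢ, yᵢ}` a face.
-/

namespace SC

variable {V : Type*} [DecidableEq V] {Δ : SC V} {D : ℕ} {σ τ : Finset V} {u v w : V}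

lemma mem_vertexSet : w ∈ Δ.vertexSet ↔ ∃ τ ∈ Δ.faces, w ∈ τ := by
  simp [vertexSet, mem_sup]

lemma mem_vertexSet_of_mem (hτ : τ ∈ Δ.faces) (hw : w ∈ τ) : w ∈ Δ.vertexSet :=
  mem_vertexSet.2 ⟨τ, hτ, hw⟩

lemma pair_mem_of_mem (hτ : τ ∈ Δ.faces) (hu : u ∈ τ) (hv : v ∈ τ) :
    ({u, v} : Finset V) ∈ Δ.faces :=
  Δ.down_closed hτ (insert_subset hu (singleton_subset_iff.2 hv))

lemma IsFlag.insert_mem (hflag : Δ.IsFlag) (hσ : σ ∈ Δ.faces)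
    (hu : ∀ b ∈ insert u σ, ({u, b} : Finset V) ∈ Δ.faces) : insert u σ ∈ Δ.faces := by
  refine hflag _ fun a ha b hb => ?_
  rcases mem_insert.1 ha with rfl | ha
  · exact hu b hb
  rcases mem_insert.1 hb with hbu | hb
  · rw [hbu, pair_comm]
    exact hu a (mem_insert_of_mem ha)
  · exact pair_mem_of_mem hσ ha hb

lemma IsFlag.pair_notMem_of_insert_erase_mem (hflag : Δ.IsFlag)
    (hdim : ∀ τ ∈ Δ.faces, τ.card ≤ D + 1) (hσ : σ ∈ Δ.faces) (hcard : σ.card = D + 1)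
    (hu : u ∉ σ) (hτ : insert u (σ.erase v) ∈ Δ.faces) : ({u, v} : Finset V) ∉ Δ.faces := by
  intro huv
  have hins : insert u σ ∈ Δ.faces := hflag.insert_mem hσ fun b hb => by
    by_cases hbv : b = v
    · exact hbv ▸ huv
    · refine pair_mem_of_mem hτ (mem_insert_self _ _) ?_
      rcases mem_insert.1 hb with rfl | hb
      · exact mem_insert_self _ _
      · exact mem_insert_of_mem (mem_erase.2 ⟨hbv, hb⟩)
  have := hdim _ hins
  rw [card_insert_of_notMem hu] at this
  omega

lemma IsWeakPseudo.exists_insert_erase_mem (hwp : Δ.IsWeakPseudo D) (hσ : σ ∈ Δ.faces)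
    (hcard : σ.card = D + 1) (hv : v ∈ σ) : ∃ u ∉ σ, insert u (σ.erase v) ∈ Δ.faces := by
  have hρ : σ.erase v ∈ Δ.faces := Δ.down_closed hσ (erase_subset v σ)
  have hρcard : (σ.erase v).card = D := by rw [card_erase_of_mem hv, hcard]; rfl
  obtain ⟨τ, hτ, hτσ⟩ := exists_mem_ne (by rw [hwp.2 _ hρ hρcard]; omega) σ
  obtain ⟨hτf, hρτ, hτcard⟩ := mem_filter.1 hτ
  obtain ⟨u, huτ, huσ⟩ := not_subset.1 fun h => hτσ (eq_of_subset_of_card_le h (by omega))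
  have hτeq : insert u (σ.erase v) = τ := by
    refine eq_of_subset_of_card_le (insert_subset huτ hρτ) ?_
    rw [card_insert_of_notMem fun h => huσ (mem_of_mem_erase h), hρcard, hτcard]
  exact ⟨u, huσ, hτeq ▸ hτf⟩

lemma IsWeakPseudo.exists_antipode (hwp : Δ.IsWeakPseudo D) (hflag : Δ.IsFlag)
    (hσ : σ ∈ Δ.faces) (hcard : σ.card = D + 1) (hv : v ∈ σ) :
    ∃ u ∉ σ, insert u (σ.erase v) ∈ Δ.faces ∧ ({u, v} : Finset V) ∉ Δ.faces := by
  obtain ⟨u, huσ, hτ⟩ := hwp.exists_insert_erase_mem hσ hcard hv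
  exact ⟨u, huσ, hτ, hflag.pair_notMem_of_insert_erase_mem hwp.1.1 hσ hcard huσ hτ⟩

lemma IsCrossPolytopeBoundary.card_vertexSet_le {d : ℕ} (h : Δ.IsCrossPolytopeBoundary d) :
    Δ.vertexSet.card ≤ 2 * d := by
  obtain ⟨x, y, -, -, -, hfaces⟩ := h
  have hsub : Δ.vertexSet ⊆ univ.image x ∪ univ.image y := fun w hw => by
    obtain ⟨τ, hτ, hwτ⟩ := mem_vertexSet.1 hw
    obtain ⟨i, rfl | rfl⟩ := ((hfaces τ).1 hτ).1 w hwτ <;> simp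
  calc Δ.vertexSet.card ≤ (univ.image x ∪ univ.image y).card := card_le_card hsub
    _ ≤ (univ.image x).card + (univ.image y).card := card_union_le _ _
    _ ≤ d + d := add_le_add (card_image_le.trans (by simp)) (card_image_le.trans (by simp))
    _ = 2 * d := (two_mul d).symm

structure IsAntipodalFrame {ι : Type*} [Fintype ι] (Δ : SC V) (x y : ι → V) : Prop where
  injective : Function.Injective x
  base_mem : univ.image x ∈ Δ.faces
  ne : ∀ i j, y i ≠ x j
  flip_mem : ∀ i, insert (y i) ((univ.image x).erase (x i)) ∈ Δ.faces
  not_adj : ∀ i, ({y i, x i} : Finset V) ∉ Δ.faces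

lemma IsWeakPseudo.exists_isAntipodalFrame (hwp : Δ.IsWeakPseudo D) (hflag : Δ.IsFlag) :
    ∃ x y : Fin (D + 1) → V, Δ.IsAntipodalFrame x y := by
  obtain ⟨σ, hσ, hcard⟩ := hwp.1.2.1
  let e := σ.equivFinOfCardEq hcard
  let x : Fin (D + 1) → V := fun i => e.symm i
  have hx : univ.image x = σ := by
    ext w
    refine ⟨fun hw => ?_, fun hw => mem_image.2 ⟨e ⟨w, hw⟩, mem_univ _, by simp [x]⟩⟩
    obtain ⟨i, -, rfl⟩ := mem_image.1 hw
    exact (e.symm i).2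
  choose y hyσ hflip hadj using fun i => hwp.exists_antipode hflag hσ hcard (e.symm i).2
  refine ⟨x, y, fun i j hij => e.symm.injective (Subtype.ext hij), hx ▸ hσ, ?_, hx ▸ hflip, hadj⟩
  exact fun i j hij => hyσ i (hij ▸ (e.symm j).2)

namespace IsAntipodalFrame

variable {ι : Type*} [Fintype ι] {x y : ι → V} {i j : ι}

lemma mem_flip_of_ne (h : Δ.IsAntipodalFrame x y) (hij : i ≠ j) :
    x j ∈ insert (y i) ((univ.image x).erase (x i)) :=
  mem_insert_of_mem
    (mem_erase.2 ⟨fun hx => hij (h.injective hx).symm, mem_image_of_mem x (mem_univ j)⟩)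

lemma pair_mem (h : Δ.IsAntipodalFrame x y) (hij : i ≠ j) : ({y i, x j} : Finset V) ∈ Δ.faces :=
  pair_mem_of_mem (h.flip_mem i) (mem_insert_self _ _) (h.mem_flip_of_ne hij)

lemma injective_right (h : Δ.IsAntipodalFrame x y) : Function.Injective y := fun i j hij => by
  by_contra hne
  exact h.not_adj j (hij ▸ h.pair_mem hne)

lemma union_subset_vertexSet (h : Δ.IsAntipodalFrame x y) :
    univ.image x ∪ univ.image y ⊆ Δ.vertexSet := by
  refine union_subset (fun w hw => mem_vertexSet_of_mem h.base_mem hw) fun w hw => ?_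
  obtain ⟨i, -, rfl⟩ := mem_image.1 hw
  exact mem_vertexSet_of_mem (h.flip_mem i) (mem_insert_self _ _)

lemma card_union (h : Δ.IsAntipodalFrame x y) :
    (univ.image x ∪ univ.image y).card = 2 * Fintype.card ι := by
  have hdisj : Disjoint (univ.image x) (univ.image y) := by
    simp only [disjoint_left, mem_image, mem_univ, true_and]
    rintro _ ⟨i, rfl⟩ ⟨j, hj⟩
    exact h.ne j i hj
  rw [card_union_of_disjoint hdisj, card_image_of_injective _ h.injective,
    card_image_of_injective _ h.injective_right, card_univ, two_mul]

lemma two_mul_card_le (h : Δ.IsAntipodalFrame x y) :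
    2 * Fintype.card ι ≤ Δ.vertexSet.card :=
  h.card_union ▸ card_le_card h.union_subset_vertexSet

lemma vertexSet_eq_of_card_eq (h : Δ.IsAntipodalFrame x y)
    (hV : Δ.vertexSet.card = 2 * Fintype.card ι) :
    Δ.vertexSet = univ.image x ∪ univ.image y :=
  (eq_of_subset_of_card_le h.union_subset_vertexSet (by rw [h.card_union, hV])).symm

lemma eq_of_pair_notMem (h : Δ.IsAntipodalFrame x y)
    (hV : Δ.vertexSet = univ.image x ∪ univ.image y) (hw : w ∈ Δ.vertexSet)
    (hwx : ({w, x j} : Finset V) ∉ Δ.faces) : w = y j := by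
  rw [hV, mem_union] at hw
  rcases hw with hw | hw
  · exact absurd (pair_mem_of_mem h.base_mem hw (mem_image_of_mem x (mem_univ j))) hwx
  · obtain ⟨k, -, rfl⟩ := mem_image.1 hw
    by_contra hkj
    exact hwx (h.pair_mem fun hk => hkj (hk ▸ rfl))

lemma pair_mem_right (h : Δ.IsAntipodalFrame x y) (hflag : Δ.IsFlag)
    (hwp : Δ.IsWeakPseudo D) (hι : Fintype.card ι = D + 1)
    (hV : Δ.vertexSet = univ.image x ∪ univ.image y) (hij : i ≠ j) :
    ({y i, y j} : Finset V) ∈ Δ.faces := by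
  have hcard : (insert (y i) ((univ.image x).erase (x i))).card = D + 1 := by
    rw [card_insert_of_notMem fun hy => (mem_image.1 (mem_of_mem_erase hy)).elim
        fun k hk => h.ne i k hk.2.symm,
      card_erase_of_mem (mem_image_of_mem x (mem_univ i)),
      card_image_of_injective _ h.injective, card_univ, hι, Nat.add_sub_cancel]
  obtain ⟨w, -, hwflip, hwx⟩ := hwp.exists_antipode hflag (h.flip_mem i) hcard
    (h.mem_flip_of_ne hij)
  obtain rfl := h.eq_of_pair_notMem hV (mem_vertexSet_of_mem hwflip (mem_insert_self _ _)) hwx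
  exact pair_mem_of_mem hwflip
    (mem_insert_of_mem (mem_erase.2 ⟨h.ne i j, mem_insert_self _ _⟩)) (mem_insert_self _ _)

lemma isCrossPolytopeBoundary {x y : Fin (D + 1) → V} (h : Δ.IsAntipodalFrame x y)
    (hflag : Δ.IsFlag) (hwp : Δ.IsWeakPseudo D)
    (hV : Δ.vertexSet = univ.image x ∪ univ.image y) :
    Δ.IsCrossPolytopeBoundary (D + 1) := by
  refine ⟨x, y, h.injective, h.injective_right, fun i j => (h.ne j i).symm, fun τ =>
    ⟨fun hτ => ⟨fun w hw => ?_, fun i hi => h.not_adj i (pair_mem_of_mem hτ hi.2 hi.1)⟩,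
      fun ⟨hcover, hanti⟩ => hflag τ fun a ha b hb => ?_⟩⟩
  · have hw' := hV ▸ mem_vertexSet_of_mem hτ hw
    simp only [mem_union, mem_image, mem_univ, true_and] at hw'
    rcases hw' with ⟨i, rfl⟩ | ⟨i, rfl⟩
    exacts [⟨i, Or.inl rfl⟩, ⟨i, Or.inr rfl⟩]
  · obtain ⟨i, rfl | rfl⟩ := hcover a ha <;> obtain ⟨j, rfl | rfl⟩ := hcover b hb
    · exact pair_mem_of_mem h.base_mem (mem_image_of_mem x (mem_univ i))
        (mem_image_of_mem x (mem_univ j))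
    · rcases eq_or_ne j i with rfl | hji
      · exact absurd ⟨ha, hb⟩ (hanti j)
      · rw [pair_comm]
        exact h.pair_mem hji
    · rcases eq_or_ne i j with rfl | hij
      · exact absurd ⟨hb, ha⟩ (hanti i)
      · exact h.pair_mem hij
    · rcases eq_or_ne i j with rfl | hij
      · exact pair_mem_of_mem (h.flip_mem i) (mem_insert_self _ _) (mem_insert_self _ _)
      · exact h.pair_mem_right hflag hwp (Fintype.card_fin _) hV hij

end IsAntipodalFrame

end SC

/-- A flag normal `(d-1)`-pseudomanifold (`d ≥ 2`) has at least `2d`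
vertices, with equality iff it is the boundary of the `d`-dimensional cross-polytope. -/
theorem statement_10 {V : Type*} [DecidableEq V] (Δ : SC V) (d : ℕ) (hd : 2 ≤ d)
    (hflag : Δ.IsFlag) (hnp : Δ.IsNormalPseudo (d - 1)) :
    2 * d ≤ Δ.vertexSet.card ∧
    (Δ.vertexSet.card = 2 * d ↔ Δ.IsCrossPolytopeBoundary d) := by
  obtain ⟨D, rfl⟩ : ∃ D, d = D + 1 := ⟨d - 1, by omega⟩
  have hwp : Δ.IsWeakPseudo D := hnp.1
  obtain ⟨x, y, h⟩ := hwp.exists_isAntipodalFrame hflag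
  have hlow : 2 * (D + 1) ≤ Δ.vertexSet.card := by simpa using h.two_mul_card_le
  refine ⟨hlow, fun hcard => ?_, fun hcross => le_antisymm hcross.card_vertexSet_le hlow⟩
  exact h.isCrossPolytopeBoundary hflag hwp (h.vertexSet_eq_of_card_eq (by simpa using hcard))
end

section
/- Let Δ be a flag (d-1)-dimensional simplicial complex and let σ = τ_1 ∪ τ_2 be a facet of Δ where τ_1 is an i-face and τ_2 is a (d-i-2)-face. If V(lk_Δ τ_1) ∪ V(lk_Δ τ_2) = V(Δ), then Δ is a subcomplex of the join lk_Δ τ_1 * lk_Δ τ_2. -/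
open Finset

/-!
Split a face `ρ` into the vertices lying in `V(lk τ₁)` and the rest, which by the covering
hypothesis lie in `V(lk τ₂)`. In a flag complex a face all of whose vertices lie in `V(lk τ)`
is itself a face of `lk τ`: every vertex of it forms an edge with every vertex of `τ`, so its
union with `τ` is a clique, hence a face.
-/

namespace SC

variable {V : Type*} [DecidableEq V] {Δ : SC V}

lemma subset_vertexSet {σ : Finset V} (hσ : σ ∈ Δ.faces) : σ ⊆ Δ.vertexSet :=
  fun _ hv => mem_sup.2 ⟨σ, hσ, hv⟩

lemma insert_mem_faces_of_mem_vertexSet_link {τ : Finset V} {v : V}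
    (hv : v ∈ (Δ.link τ).vertexSet) : v ∉ τ ∧ insert v τ ∈ Δ.faces := by
  obtain ⟨γ, hγ, hvγ⟩ := mem_sup.1 hv
  rcases mem_insert.1 hγ with rfl | hγ
  · simp at hvγ
  obtain ⟨-, hγτ, hunion⟩ := mem_filter.1 hγ
  exact ⟨disjoint_left.1 hγτ hvγ,
    Δ.down_closed hunion (insert_subset (mem_union_left _ hvγ) subset_union_right)⟩

lemma union_mem_join {Γ : SC V} {σ ρ : Finset V} (hσ : σ ∈ Δ.faces) (hρ : ρ ∈ Γ.faces) :
    σ ∪ ρ ∈ (Δ.join Γ).faces :=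
  mem_image.2 ⟨(σ, ρ), mem_product.2 ⟨hσ, hρ⟩, rfl⟩

lemma IsFlag.mem_link_faces (hflag : Δ.IsFlag) {ρ τ : Finset V} (hρ : ρ ∈ Δ.faces)
    (hτ : τ ∈ Δ.faces) (hρτ : ρ ⊆ (Δ.link τ).vertexSet) : ρ ∈ (Δ.link τ).faces := by
  have hedge : ∀ u ∈ ρ, ∀ v ∈ τ, ({u, v} : Finset V) ∈ Δ.faces := fun u hu v hv =>
    Δ.down_closed (insert_mem_faces_of_mem_vertexSet_link (hρτ hu)).2
      (insert_subset_insert u (singleton_subset_iff.2 hv))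
  have hclique : ρ ∪ τ ∈ Δ.faces := by
    refine hflag _ fun u hu v hv => ?_
    rcases mem_union.1 hu with hu | hu <;> rcases mem_union.1 hv with hv | hv
    · exact Δ.down_closed hρ (insert_subset hu (singleton_subset_iff.2 hv))
    · exact hedge u hu v hv
    · exact pair_comm u v ▸ hedge v hv u hu
    · exact Δ.down_closed hτ (insert_subset hu (singleton_subset_iff.2 hv))
  have hdisj : Disjoint ρ τ := disjoint_left.2 fun _ hv =>
    (insert_mem_faces_of_mem_vertexSet_link (hρτ hv)).1
  exact mem_insert_of_mem (mem_filter.2 ⟨hρ, hdisj, hclique⟩)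

theorem IsFlag.faces_subset_join_link (hflag : Δ.IsFlag) {τ₁ τ₂ : Finset V}
    (hτ₁ : τ₁ ∈ Δ.faces) (hτ₂ : τ₂ ∈ Δ.faces)
    (hcover : Δ.vertexSet ⊆ (Δ.link τ₁).vertexSet ∪ (Δ.link τ₂).vertexSet) :
    Δ.faces ⊆ ((Δ.link τ₁).join (Δ.link τ₂)).faces := by
  intro ρ hρ
  have hρ₁ : ρ ∩ (Δ.link τ₁).vertexSet ∈ (Δ.link τ₁).faces :=
    hflag.mem_link_faces (Δ.down_closed hρ inter_subset_left) hτ₁ inter_subset_right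
  have hρ₂ : ρ \ (Δ.link τ₁).vertexSet ∈ (Δ.link τ₂).faces := by
    refine hflag.mem_link_faces (Δ.down_closed hρ sdiff_subset) hτ₂ fun v hv => ?_
    obtain ⟨hvρ, hv₁⟩ := mem_sdiff.1 hv
    exact (mem_union.1 (hcover (subset_vertexSet hρ hvρ))).resolve_left hv₁
  have hsplit := union_mem_join hρ₁ hρ₂
  rwa [union_comm, sdiff_union_inter] at hsplit

end SC

theorem statement_13_general {V : Type*} [DecidableEq V] (Δ : SC V)
    (hflag : Δ.IsFlag)
    (τ₁ τ₂ : Finset V) (hfacet : Δ.IsFacet (τ₁ ∪ τ₂))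
    (hcover : (Δ.link τ₁).vertexSet ∪ (Δ.link τ₂).vertexSet = Δ.vertexSet) :
    Δ.faces ⊆ ((Δ.link τ₁).join (Δ.link τ₂)).faces :=
  hflag.faces_subset_join_link (Δ.down_closed hfacet.1 subset_union_left)
    (Δ.down_closed hfacet.1 subset_union_right) hcover.ge

/-- In a flag `(d-1)`-dimensional complex with a facet `σ = τ₁ ∪ τ₂`
where `τ₁` is an `i`-face and `τ₂` a `(d-i-2)`-face, if the vertex sets of the links
of `τ₁` and `τ₂` cover all of `V(Δ)`, then `Δ ⊆ lk τ₁ * lk τ₂`. -/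
theorem statement_13 {V : Type*} [DecidableEq V] (Δ : SC V) (d i : ℕ)
    (hi : i + 2 ≤ d) (hflag : Δ.IsFlag) (hdim : ∀ τ ∈ Δ.faces, τ.card ≤ d)
    (τ₁ τ₂ : Finset V) (hdisj : Disjoint τ₁ τ₂) (hfacet : Δ.IsFacet (τ₁ ∪ τ₂))
    (hc1 : τ₁.card = i + 1) (hc2 : τ₂.card = d - i - 1)
    (hcover : (Δ.link τ₁).vertexSet ∪ (Δ.link τ₂).vertexSet = Δ.vertexSet) :
    Δ.faces ⊆ ((Δ.link τ₁).join (Δ.link τ₂)).faces :=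
  statement_13_general Δ hflag τ₁ τ₂ hfacet hcover
end
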